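/- Fix N ≥ 1, strictly positive targets v : Fin N → ℝ, and a constant c > 0. On a probability space (Ω, 𝔽, ℙ), let X_1, …, X_N : Ω → ℝ be measurable (the persona means), and for each n let V̂_p^{(n)} : Ω → ℝ be measurable, strictly positive, with V̂_p^{(n)} → c·v_p in probability as n → ∞ for each p. Let Ŵ_p^{(n)} = (V̂_p^{(n)})^{-1}/Σ_q (V̂_q^{(n)})^{-1} and w*_p = v_p^{-1}/Σ_q v_q^{-1}. Then the feasible OWB estimator Σ_p Ŵ_p^{(n)} X_p converges in probability (as n → ∞) to the ideal OWB estimator Σ_p w*_p X_p, i.e., Σ_p Ŵ_p^{(n)} X_p − Σ_p w*_p X_p → 0 in probability. -/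

import Mathlib

/-!
The inverse-variance weight map `V ↦ V⁻¹ / ∑ V⁻¹` is invariant under a common positive scaling
and continuous at every positive vector. Hence, for each `ω`, the difference of the two estimators
is a continuous function of the vector of variance estimates which vanishes at its limit `c v`,
and the continuous mapping theorem for convergence in measure (proved through the criterion that
every subsequence has an almost surely convergent subsequence) finishes the proof.
-/

open MeasureTheory ProbabilityTheory Filter

namespace MeasureTheory

variable {α ι κ : Type*} [MeasurableSpace α] {μ : Measure α}

theorem tendstoInMeasure_pi [Fintype κ] {E : κ → Type*} [∀ k, EDist (E k)] {l : Filter ι}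
    {f : ι → α → ∀ k, E k} {g : α → ∀ k, E k}
    (h : ∀ k, TendstoInMeasure μ (fun i x => f i x k) l (fun x => g x k)) :
    TendstoInMeasure μ f l g := by
  intro ε hε
  have h_subset : ∀ i,
      {x | ε ≤ edist (f i x) (g x)} ⊆ ⋃ k, {x | ε ≤ edist (f i x k) (g x k)} := by
    intro i x hx
    simpa [edist_pi_def, Finset.le_sup_iff hε] using hx
  refine tendsto_of_tendsto_of_tendsto_of_le_of_le tendsto_const_nhds
    (by simpa using tendsto_finsetSum Finset.univ fun k _ => h k ε hε) (fun _ => zero_le)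
    fun i => (measure_mono (h_subset i)).trans (measure_iUnion_fintype_le _ _)

theorem TendstoInMeasure.comp_continuousAt {E F : Type*} [PseudoEMetricSpace E]
    [PseudoEMetricSpace F] [IsFiniteMeasure μ] {f : ℕ → α → E} {g : α → E}
    (hfg : TendstoInMeasure μ f atTop g) {φ : α → E → F}
    (hφ : ∀ᵐ x ∂μ, ContinuousAt (φ x) (g x))
    (hφf : ∀ n, AEStronglyMeasurable (fun x => φ x (f n x)) μ) :
    TendstoInMeasure μ (fun n x => φ x (f n x)) atTop (fun x => φ x (g x)) := by
  rw [exists_seq_tendstoInMeasure_atTop_iff hφf]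
  intro ns hns
  obtain ⟨ns', hns', h_ae⟩ := (hfg.comp hns.tendsto_atTop).exists_seq_tendsto_ae
  refine ⟨ns', hns', ?_⟩
  filter_upwards [h_ae, hφ] with x hx hφx
  exact hφx.tendsto.comp hx

end MeasureTheory

section InverseVarianceWeights

variable {ι : Type*} [Fintype ι]

noncomputable def invVarWeight (V : ι → ℝ) (p : ι) : ℝ := (V p)⁻¹ / ∑ q, (V q)⁻¹

theorem invVarWeight_const_mul {c : ℝ} (hc : c ≠ 0) (V : ι → ℝ) :
    invVarWeight (fun q => c * V q) = invVarWeight V := by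
  funext p
  simp only [invVarWeight, mul_inv, ← Finset.mul_sum]
  exact mul_div_mul_left _ _ (inv_ne_zero hc)

theorem continuousAt_invVarWeight {V : ι → ℝ} (hV : ∀ q, 0 < V q) (p : ι) :
    ContinuousAt (fun W => invVarWeight W p) V := by
  have h_sum : 0 < ∑ q, (V q)⁻¹ :=
    Finset.sum_pos (fun q _ => inv_pos.2 (hV q)) ⟨p, Finset.mem_univ p⟩
  exact ((continuous_apply p).continuousAt.inv₀ (hV p).ne').div
    (tendsto_finsetSum _ fun q _ => (continuous_apply q).continuousAt.inv₀ (hV q).ne')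
    h_sum.ne'

end InverseVarianceWeights

theorem owb_feasible_estimator_consistent_general
    {Ω : Type*} [MeasureSpace Ω] [IsProbabilityMeasure (ℙ : Measure Ω)]
    (N : ℕ)
    (v : Fin N → ℝ) (hv : ∀ p, 0 < v p)
    (c : ℝ) (hc : 0 < c)
    (X : Fin N → Ω → ℝ) (hXmeas : ∀ p, Measurable (X p))
    (Vhat : ℕ → Fin N → Ω → ℝ)
    (hVmeas : ∀ n p, Measurable (Vhat n p))
    (hVconv : ∀ p, TendstoInMeasure ℙ (fun n => Vhat n p) atTop (fun _ => c * v p)) :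
    TendstoInMeasure (ℙ : Measure Ω)
      (fun (n : ℕ) (ω : Ω) =>
        (∑ p, ((Vhat n p ω)⁻¹ / ∑ q, (Vhat n q ω)⁻¹) * X p ω)
          - ∑ p, ((v p)⁻¹ / ∑ q, (v q)⁻¹) * X p ω)
      atTop (fun _ => (0 : ℝ)) := by
  have hVhat : TendstoInMeasure ℙ (fun n ω p => Vhat n p ω) atTop (fun _ p => c * v p) :=
    tendstoInMeasure_pi hVconv
  have hcv : ∀ p, 0 < c * v p := fun p => mul_pos hc (hv p)
  have h_cont : ∀ ω, ContinuousAt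
      (fun W => ∑ p, invVarWeight W p * X p ω - ∑ p, invVarWeight v p * X p ω)
      (fun p => c * v p) :=
    fun ω => (tendsto_finsetSum _ fun p _ =>
      (continuousAt_invVarWeight hcv p).mul continuousAt_const).sub continuousAt_const
  have h_meas : ∀ n, Measurable fun ω =>
      ∑ p, invVarWeight (fun q => Vhat n q ω) p * X p ω - ∑ p, invVarWeight v p * X p ω := by
    intro n
    unfold invVarWeight
    fun_prop
  have h := hVhat.comp_continuousAt (ae_of_all _ h_cont) fun n => (h_meas n).aestronglyMeasurable
  simp only [invVarWeight_const_mul hc.ne', sub_self] at h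
  exact h

/-- The feasible OWB estimator (built from variance estimates that are
consistent up to a common positive scale) converges in probability to the ideal OWB
estimator: their difference tends to 0 in probability. -/
theorem owb_feasible_estimator_consistent
    {Ω : Type*} [MeasureSpace Ω] [IsProbabilityMeasure (ℙ : Measure Ω)]
    (N : ℕ) (hN : 1 ≤ N)
    (v : Fin N → ℝ) (hv : ∀ p, 0 < v p)
    (c : ℝ) (hc : 0 < c)
    (X : Fin N → Ω → ℝ) (hXmeas : ∀ p, Measurable (X p))
    (Vhat : ℕ → Fin N → Ω → ℝ)
    (hVmeas : ∀ n p, Measurable (Vhat n p))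
    (hVpos : ∀ n p ω, 0 < Vhat n p ω)
    (hVconv : ∀ p, TendstoInMeasure ℙ (fun n => Vhat n p) atTop (fun _ => c * v p)) :
    TendstoInMeasure (ℙ : Measure Ω)
      (fun (n : ℕ) (ω : Ω) =>
        (∑ p, ((Vhat n p ω)⁻¹ / ∑ q, (Vhat n q ω)⁻¹) * X p ω)
          - ∑ p, ((v p)⁻¹ / ∑ q, (v q)⁻¹) * X p ω)
      atTop (fun _ => (0 : ℝ)) :=
  owb_feasible_estimator_consistent_general N v hv c hc X hXmeas Vhat hVmeas hVconv
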